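/- arXiv:2107.09743 — 4 statements merged into one kernel-verified Lean document; each statement's English description precedes it below -/
import Mathlib

section
/- For all n ≥ 3, φ(n) ≥ (1/3)·2^(2^n). -/
/-- `F n = (a n ·, b n ·, φ n)` from the recursive construction;
    `φ 1 := 1` by convention. -/
def F : ℕ → ((ℕ → ℚ) × (ℕ → ℚ) × ℚ)
  | 0 => (fun _ => 0, fun _ => 0, 1)
  | 1 => (fun j => if j = 1 then 1 else 0, fun j => if j = 1 then 1 else 0, 1)
  | (n+2) =>
      let p := F (n+1)
      let th : ℚ := 3 * p.1 (n+1)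
      let ph : ℚ := if n = 0 then 4
        else 4 * ∑ j ∈ Finset.Icc 1 (n+1), (th * p.2.1 j - 3 * p.1 j)
      (fun j => if j = n+2 then ph else 4 * p.1 j,
       fun j => if j = n+2 then 1 else (1 + th) * p.2.1 j,
       ph)

/-- coefficient `a(n,j)` -/
def a (n j : ℕ) : ℚ := (F n).1 j
/-- coefficient `b(n,j)` -/
def b (n j : ℕ) : ℚ := (F n).2.1 j
/-- `φ(n)` -/
def phi (n : ℕ) : ℚ := (F n).2.2
/-- `θ(n) = 3·a(n-1,n-1)` -/
def theta (n : ℕ) : ℚ := 3 * a (n-1) (n-1)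

/-!
With `S n = ∑ⱼ b(n,j)` and `T n = ∑ⱼ a(n,j)`, summing the recursion gives, for `n ≥ 2`,
`φ(n+1) = 12 (φ(n) S(n) − T(n))`, `S(n+1) = 1 + (1 + 3φ(n)) S(n)` and `T(n+1) = φ(n+1) + 4 T(n)`:
a closed recursion on the triple `(φ, S, T)`. Along it the inequality `φ S − T ≥ φ² / 4` propagates,
and it says exactly that `φ(n+1) ≥ 3 φ(n)²`; from `φ(3) = 144 ≥ 2⁸ / 3` the doubly exponential
bound follows by squaring.
-/

def PhiInvariant {K : Type*} [Field K] [LinearOrder K] (φ S T : K) : Prop :=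
  0 ≤ S ∧ 0 ≤ T ∧ 4 ≤ φ ∧ φ ^ 2 / 4 ≤ φ * S - T

theorem PhiInvariant.step {K : Type*} [Field K] [LinearOrder K] [IsStrictOrderedRing K]
    {φ S T : K} (h : PhiInvariant φ S T) :
    PhiInvariant (12 * (φ * S - T)) (1 + (1 + 3 * φ) * S) (12 * (φ * S - T) + 4 * T) := by
  obtain ⟨hS, hT, hφ, hD⟩ := h
  have hφ' : 4 ≤ 12 * (φ * S - T) := by nlinarith
  refine ⟨by positivity, by linarith, hφ', ?_⟩
  -- with `D = φ S − T`, the new defect is `36 D² + 36 D T + 12 D S − 4 T` where `D ≥ φ² / 4 ≥ 4`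
  nlinarith [mul_nonneg hS hT, mul_nonneg hS (sq_nonneg φ)]

theorem a_succ_succ (n j : ℕ) :
    a (n + 2) j = if j = n + 2 then phi (n + 2) else 4 * a (n + 1) j := by
  simp only [a, phi, F]

theorem b_succ_succ (n j : ℕ) :
    b (n + 2) j = if j = n + 2 then 1 else (1 + 3 * a (n + 1) (n + 1)) * b (n + 1) j := by
  simp only [a, b, F]

theorem phi_add_three_eq_sum (n : ℕ) :
    phi (n + 3) = 4 * ∑ j ∈ Finset.Icc 1 (n + 2),
      (3 * a (n + 2) (n + 2) * b (n + 2) j - 3 * a (n + 2) j) := by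
  simp only [a, b, phi, F, if_neg n.succ_ne_zero]

theorem a_self {n : ℕ} (hn : 1 ≤ n) : a n n = phi n := by
  match n, hn with
  | 1, _ => simp [a, phi, F]
  | n + 2, _ => rw [a_succ_succ, if_pos rfl]

def bSum (n : ℕ) : ℚ := ∑ j ∈ Finset.Icc 1 n, b n j

def aSum (n : ℕ) : ℚ := ∑ j ∈ Finset.Icc 1 n, a n j

theorem bSum_add_two (n : ℕ) : bSum (n + 2) = 1 + (1 + 3 * phi (n + 1)) * bSum (n + 1) := by
  rw [bSum, Finset.sum_Icc_succ_top (by omega), b_succ_succ, if_pos rfl,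
    Finset.sum_congr rfl fun j hj => by
      rw [b_succ_succ, if_neg (by simp only [Finset.mem_Icc] at hj; omega), a_self (by omega)],
    ← Finset.mul_sum, bSum]
  ring

theorem aSum_add_two (n : ℕ) : aSum (n + 2) = phi (n + 2) + 4 * aSum (n + 1) := by
  rw [aSum, Finset.sum_Icc_succ_top (by omega), a_succ_succ, if_pos rfl,
    Finset.sum_congr rfl fun j hj => by
      rw [a_succ_succ, if_neg (by simp only [Finset.mem_Icc] at hj; omega)],
    ← Finset.mul_sum, aSum]
  ring

theorem phi_add_three (n : ℕ) :
    phi (n + 3) = 12 * (phi (n + 2) * bSum (n + 2) - aSum (n + 2)) := by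
  rw [phi_add_three_eq_sum, a_self (by omega), Finset.sum_sub_distrib, bSum, aSum]
  simp only [mul_assoc, ← Finset.mul_sum]
  ring

theorem phi_two : phi 2 = 4 := by norm_num [phi, F]

theorem bSum_two : bSum 2 = 5 := by norm_num [bSum, Finset.sum_Icc_succ_top, b, F]

theorem aSum_two : aSum 2 = 8 := by norm_num [aSum, Finset.sum_Icc_succ_top, a, F]

theorem phiInvariant_add_two (n : ℕ) :
    PhiInvariant (phi (n + 2)) (bSum (n + 2)) (aSum (n + 2)) := by
  induction n with
  | zero => norm_num [PhiInvariant, phi_two, bSum_two, aSum_two]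
  | succ n ih =>
    rw [bSum_add_two, aSum_add_two, phi_add_three n]
    exact ih.step

theorem three_mul_phi_sq_le (n : ℕ) : 3 * phi (n + 2) ^ 2 ≤ phi (n + 3) := by
  obtain ⟨-, -, -, hD⟩ := phiInvariant_add_two n
  rw [phi_add_three]
  linarith

theorem phi_lower_bound (n : ℕ) (hn : 3 ≤ n) :
    (1/3 : ℚ) * 2 ^ (2 ^ n) ≤ phi n := by
  induction n, hn using Nat.le_induction with
  | base =>
    rw [phi_add_three, phi_two, bSum_two, aSum_two]
    norm_num
  | succ n hn ih =>
    obtain ⟨m, rfl⟩ : ∃ m, n = m + 2 := ⟨n - 2, by omega⟩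
    calc (1/3 : ℚ) * 2 ^ (2 ^ (m + 2 + 1))
        = 3 * ((1/3 : ℚ) * 2 ^ (2 ^ (m + 2))) ^ 2 := by rw [pow_succ, pow_mul]; ring
      _ ≤ 3 * phi (m + 2) ^ 2 := by gcongr
      _ ≤ phi (m + 3) := three_mul_phi_sq_le m
end

section
/- For all n ≥ 2 and all 1 ≤ j ≤ n-1, θ(n)·b(n-1,j) − 3·a(n-1,j) ≥ 0. (That is, the capacity u(n,j) := θ(n)·b(n-1,j) − 3·a(n-1,j) of the internal arc n → j is non-negative.) -/
/-!
Write `A n = a n n` and `gap n j = A n * b n j - a n j`, so that the capacity of `n + 1 → j` is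
`3 * gap n j`. Off the diagonal the recursion gives
`gap (n+1) j = (A (n+1) * (1 + 3 A n) - 4 A n) * b n j + 4 * gap n j`,
and the coefficient is at least `4 / 3` as soon as `A (n+1) ≥ 4 / 3` and `1 + 3 A n ≥ 0`.
Conversely `A (n+1)` is `12` times the sum of the nonnegative gaps of row `n`, one of which,
`gap n (n-1)`, is exactly such a coefficient; so `A n ≥ 4 / 3`, `b n j ≥ 0` and `gap n j ≥ 0`
propagate together from `n = 2`.
-/

def gap (n j : ℕ) : ℚ := a n n * b n j - a n j

lemma a_add_two (m j : ℕ) :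
    a (m + 2) j = if j = m + 2 then phi (m + 2) else 4 * a (m + 1) j := by
  simp [a, phi, F]

lemma b_add_two (m j : ℕ) :
    b (m + 2) j = if j = m + 2 then 1 else (1 + 3 * a (m + 1) (m + 1)) * b (m + 1) j := by
  simp [a, b, F]

lemma b_self {n : ℕ} (hn : 1 ≤ n) : b n n = 1 := by
  obtain _ | _ | m := n
  · omega
  · simp [b, F]
  · simp [b_add_two]

lemma gap_self {n : ℕ} (hn : 1 ≤ n) : gap n n = 0 := by
  simp [gap, b_self hn]

lemma a_add_three_self (m : ℕ) :
    a (m + 3) (m + 3) = 12 * ∑ j ∈ Finset.Icc 1 (m + 2), gap (m + 2) j := by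
  simp only [F, a, b, gap, add_eq_zero, one_ne_zero, and_false, if_false, if_true,
    Finset.mul_sum]
  refine Finset.sum_congr rfl fun j _ => ?_
  ring

lemma gap_add_two (m : ℕ) {j : ℕ} (hj : j ≠ m + 2) :
    gap (m + 2) j = (a (m + 2) (m + 2) * (1 + 3 * a (m + 1) (m + 1)) - 4 * a (m + 1) (m + 1))
      * b (m + 1) j + 4 * gap (m + 1) j := by
  simp only [gap, a_add_two m j, b_add_two m j, if_neg hj]
  ring

lemma four_thirds_le_growth {K : Type*} [Field K] [LinearOrder K] [IsStrictOrderedRing K]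
    {A A' : K} (hA' : 4 / 3 ≤ A') (hA : 0 ≤ 1 + 3 * A) :
    4 / 3 ≤ A' * (1 + 3 * A) - 4 * A := by
  nlinarith [mul_nonneg (sub_nonneg.2 hA') hA]

def CapacityInvariant (n : ℕ) : Prop :=
  4 / 3 ≤ a n n ∧ ∀ j, 1 ≤ j → j ≤ n → 0 ≤ b n j ∧ 0 ≤ gap n j

lemma capacityInvariant_two : CapacityInvariant 2 := by
  refine ⟨by norm_num [a, F], fun j hj₁ hj₂ => ?_⟩
  interval_cases j <;> norm_num [gap, a, b, F]

lemma CapacityInvariant.succ {m : ℕ} (h : CapacityInvariant (m + 2)) :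
    CapacityInvariant (m + 3) := by
  obtain ⟨hA, hbg⟩ := h
  have hgrowth : 0 ≤ 1 + 3 * a (m + 1) (m + 1) := by
    simpa [b_add_two, b_self] using (hbg (m + 1) (by omega) (by omega)).1
  have hgap_last : 4 / 3 ≤ gap (m + 2) (m + 1) := by
    rw [gap_add_two m (by omega), b_self (by omega), gap_self (by omega)]
    simpa using four_thirds_le_growth hA hgrowth
  have hA' : 16 ≤ a (m + 3) (m + 3) := by
    rw [a_add_three_self]
    have := Finset.single_le_sum (fun j hj => (hbg j (Finset.mem_Icc.1 hj).1
      (Finset.mem_Icc.1 hj).2).2) (Finset.mem_Icc.2 ⟨by omega, by omega⟩ : m + 1 ∈ _)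
    linarith
  refine ⟨by linarith, fun j hj₁ hj₂ => ?_⟩
  rcases eq_or_ne j (m + 3) with rfl | hj
  · simp [b_self, gap_self]
  obtain ⟨hb, hg⟩ := hbg j hj₁ (by omega)
  have hcoef := four_thirds_le_growth (by linarith : (4 : ℚ) / 3 ≤ a (m + 3) (m + 3))
    (by linarith : 0 ≤ 1 + 3 * a (m + 2) (m + 2))
  refine ⟨?_, ?_⟩
  · rw [b_add_two, if_neg hj]
    exact mul_nonneg (by linarith) hb
  · rw [gap_add_two (m + 1) hj]
    exact add_nonneg (mul_nonneg (by linarith) hb) (mul_nonneg (by norm_num) hg)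

lemma capacityInvariant {n : ℕ} (hn : 2 ≤ n) : CapacityInvariant n := by
  induction n, hn using Nat.le_induction with
  | base => exact capacityInvariant_two
  | succ n hn ih =>
    obtain ⟨m, rfl⟩ := Nat.exists_eq_add_of_le' hn
    exact ih.succ

lemma gap_nonneg {n j : ℕ} (hj₁ : 1 ≤ j) (hjn : j ≤ n) : 0 ≤ gap n j := by
  rcases eq_or_ne j n with rfl | hj
  · exact (gap_self hj₁).ge
  · exact ((capacityInvariant (by omega)).2 j hj₁ hjn).2

theorem internal_capacity_nonneg_general (n : ℕ) :
    ∀ j : ℕ, 1 ≤ j → j ≤ n - 1 →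
      0 ≤ theta n * b (n-1) j - 3 * a (n-1) j := by
  intro j hj₁ hjn
  have hcap : theta n * b (n - 1) j - 3 * a (n - 1) j = 3 * gap (n - 1) j := by
    simp only [theta, gap]
    ring
  rw [hcap]
  exact mul_nonneg (by norm_num) (gap_nonneg hj₁ hjn)

theorem internal_capacity_nonneg (n : ℕ) (hn : 2 ≤ n) :
    ∀ j : ℕ, 1 ≤ j → j ≤ n - 1 →
      0 ≤ theta n * b (n-1) j - 3 * a (n-1) j :=
  internal_capacity_nonneg_general n
end

section
/- For all n ≥ 3, φ(n-1) ≤ φ(n)/12, where φ(2) := 4. -/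
lemma a_succ_self (n : ℕ) : a (n+1) (n+1) = phi (n+1) := by
  cases n <;> simp [a, phi, F]

lemma b_succ_self (n : ℕ) : b (n+1) (n+1) = 1 := by
  cases n <;> simp [b, F]

lemma a_succ_of_ne {n j : ℕ} (h : j ≠ n+1) : a (n+1) j = 4 * a n j := by
  cases n <;> simp [a, F, h]

lemma b_succ_of_ne {n j : ℕ} (h : j ≠ n+1) : b (n+1) j = (1 + 3 * phi n) * b n j := by
  cases n with
  | zero => simp [b, F, h]
  | succ n => simp [b, F, h, ← a_succ_self n, a]

lemma phi_add_three_s8 (n : ℕ) :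
    phi (n+3) = 4 * ∑ j ∈ Finset.Icc 1 (n+2), (3 * phi (n+2) * b (n+2) j - 3 * a (n+2) j) := by
  simp [phi, b, F, a]

lemma a_add_two_self_sub_one (n : ℕ) : a (n+2) (n+1) = 4 * phi (n+1) := by
  rw [a_succ_of_ne (by omega), a_succ_self]

lemma b_add_two_self_sub_one (n : ℕ) : b (n+2) (n+1) = 1 + 3 * phi (n+1) := by
  rw [b_succ_of_ne (by omega), b_succ_self, mul_one]

def Admissible (n : ℕ) : Prop :=
  4 ≤ phi n ∧ (∀ j, 0 ≤ b n j) ∧ ∀ j, a n j ≤ phi n * b n j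

lemma admissible_two : Admissible 2 := by
  refine ⟨by norm_num [phi, F], fun j => ?_, fun j => ?_⟩ <;>
    simp only [a, b, phi, F] <;> split_ifs <;> norm_num

lemma twelve_mul_phi_le {n : ℕ} (hprev : 0 ≤ phi (n+1)) (h : Admissible (n+2)) :
    12 * phi (n+2) ≤ phi (n+3) := by
  obtain ⟨hphi, -, hab⟩ := h
  have hterm : ∀ j ∈ Finset.Icc 1 (n+2), 0 ≤ 3 * phi (n+2) * b (n+2) j - 3 * a (n+2) j :=
    fun j _ => by linarith [hab j]
  have hlast : 3 * phi (n+2) ≤ 3 * phi (n+2) * b (n+2) (n+1) - 3 * a (n+2) (n+1) := by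
    rw [b_add_two_self_sub_one, a_add_two_self_sub_one]
    nlinarith
  have hsum := Finset.single_le_sum hterm (show n+1 ∈ Finset.Icc 1 (n+2) by simp)
  rw [phi_add_three_s8]
  linarith

lemma admissible_succ {n : ℕ} (hprev : 0 ≤ phi (n+1)) (h : Admissible (n+2)) :
    Admissible (n+3) := by
  have hgrow := twelve_mul_phi_le hprev h
  obtain ⟨hphi, hb, hab⟩ := h
  refine ⟨by linarith, fun j => ?_, fun j => ?_⟩
  · rcases eq_or_ne j (n+3) with rfl | hj
    · rw [b_succ_self]; norm_num
    · rw [b_succ_of_ne hj]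
      exact mul_nonneg (by linarith) (hb j)
  · rcases eq_or_ne j (n+3) with rfl | hj
    · rw [a_succ_self, b_succ_self, mul_one]
    · rw [a_succ_of_ne hj, b_succ_of_ne hj]
      have hfactor : 4 * phi (n+2) ≤ phi (n+3) * (1 + 3 * phi (n+2)) := by nlinarith
      calc 4 * a (n+2) j ≤ 4 * (phi (n+2) * b (n+2) j) := by linarith [hab j]
        _ ≤ phi (n+3) * (1 + 3 * phi (n+2)) * b (n+2) j := by
          rw [← mul_assoc]; exact mul_le_mul_of_nonneg_right hfactor (hb j)
        _ = phi (n+3) * ((1 + 3 * phi (n+2)) * b (n+2) j) := by ring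

lemma admissible_add_two (n : ℕ) : 0 ≤ phi (n+1) ∧ Admissible (n+2) := by
  induction n with
  | zero => exact ⟨by norm_num [phi, F], admissible_two⟩
  | succ n ih => exact ⟨by linarith [ih.2.1], admissible_succ ih.1 ih.2⟩

theorem phi_ratio (n : ℕ) (hn : 3 ≤ n) : phi (n-1) ≤ phi n / 12 := by
  obtain ⟨k, rfl⟩ : ∃ k, n = k+3 := ⟨n-3, by omega⟩
  obtain ⟨hprev, hadm⟩ := admissible_add_two k
  show phi (k+2) ≤ phi (k+3) / 12
  rw [le_div_iff₀ (by norm_num)]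
  linarith [twelve_mul_phi_le hprev hadm]
end

section
/- For all n ≥ 4, θ(n)·φ(n-1) = φ(n) − 4·∑_{j=1}^{n-2} [θ(n)·b(n-2,j) + 3·a(n-2,j)·(θ(n) − 4)]. -/
lemma a_diag (n : ℕ) : a (n+2) (n+2) = phi (n+2) := by
  simp [a, phi, F]

lemma b_diag (n : ℕ) : b (n+2) (n+2) = 1 := by
  simp [b, F]

lemma a_rec (n j : ℕ) (h : j ≠ n+2) : a (n+2) j = 4 * a (n+1) j := by
  simp [a, F, h]

lemma b_rec (n j : ℕ) (h : j ≠ n+2) :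
    b (n+2) j = (1 + theta (n+2)) * b (n+1) j := by
  simp [b, theta, a, F, h]

lemma theta_eq (n : ℕ) : theta (n+3) = 3 * phi (n+2) := by
  show 3 * a (n+2) (n+2) = _
  rw [a_diag]

lemma phi_eq (n : ℕ) :
    phi (n+3) = 4 * ∑ j ∈ Finset.Icc 1 (n+2),
      (theta (n+3) * b (n+2) j - 3 * a (n+2) j) := by
  simp [phi, theta, a, b, F, Nat.succ_ne_zero]

theorem key_identity (n : ℕ) (hn : 4 ≤ n) :
    theta n * phi (n-1) =
      phi n - 4 * ∑ j ∈ Finset.Icc 1 (n-2),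
        (theta n * b (n-2) j + 3 * a (n-2) j * (theta n - 4)) := by
  obtain ⟨m, rfl⟩ : ∃ m, n = m + 4 := ⟨n - 4, by omega⟩
  have h1 : m + 4 - 1 = m + 3 := rfl
  have h2 : m + 4 - 2 = m + 2 := rfl
  rw [h1, h2]
  have hsplit : phi (m+4) =
      4 * ((∑ j ∈ Finset.Icc 1 (m+2),
        (theta (m+4) * b (m+3) j - 3 * a (m+3) j)) +
        (theta (m+4) * b (m+3) (m+3) - 3 * a (m+3) (m+3))) := by
    rw [phi_eq (m+1), Finset.sum_Icc_succ_top (by omega : 1 ≤ m + 3)]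
  have hzero : theta (m+4) * b (m+3) (m+3) - 3 * a (m+3) (m+3) = 0 := by
    rw [b_diag (m+1), a_diag (m+1), theta_eq (m+1)]
    ring
  rw [hsplit, hzero, add_zero, phi_eq m]
  have hcong : ∀ j ∈ Finset.Icc 1 (m+2),
      theta (m+4) * b (m+3) j - 3 * a (m+3) j =
        theta (m+4) * ((1 + theta (m+3)) * b (m+2) j) - 3 * (4 * a (m+2) j) := by
    intro j hj
    have hj' : j ≠ m + 3 := by simp at hj; omega
    rw [b_rec (m+1) j hj', a_rec (m+1) j hj']
  rw [Finset.sum_congr rfl hcong]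
  simp only [Finset.mul_sum, ← Finset.sum_sub_distrib]
  refine Finset.sum_congr rfl fun j hj => ?_
  ring
end
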